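/- Let B be a finite quasigroupoid and K a field. The quasigroupoid magma K[B] (the free K-vector space on B₁), with unit 1 = Σ_{x∈B₀} id_B(x), product μ(a⊗b) = a•b if s_B(a) = t_B(b) and 0 otherwise, counit ε(b) = 1, coproduct δ(b) = b⊗b, and antipode λ(b) = λ_B(b), is a cocommutative weak Hopf quasigroup, with target map Π^L(b) = id_B(t_B(b)) and source map Π^R(b) = id_B(s_B(b)). -/

import Mathlib

/-- A quasigroupoid: objects `O`, arrows `A`, with a partial product `mul`
(meaningful on composable pairs, i.e. when `s a = t b`) and inverse map `inv`.
All axioms involving the product are guarded by composability hypotheses. -/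
structure Quasigroupoid (O : Type*) (A : Type*) where
  s : A → O
  t : A → O
  e : O → A
  inv : A → A
  mul : A → A → A
  s_e : ∀ x, s (e x) = x
  t_e : ∀ x, t (e x) = x
  e_mul : ∀ a, mul (e (t a)) a = a
  mul_e : ∀ a, mul a (e (s a)) = a
  s_mul : ∀ a b, s a = t b → s (mul a b) = s b
  t_mul : ∀ a b, s a = t b → t (mul a b) = t a
  inv_comp_left : ∀ a b, s a = t b → s (inv a) = t (mul a b)
  inv_mul_cancel : ∀ a b, s a = t b → mul (inv a) (mul a b) = b
  comp_inv_right : ∀ a b, s a = t b → s (mul a b) = t (inv b)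
  mul_inv_cancel : ∀ a b, s a = t b → mul (mul a b) (inv b) = a

open TensorProduct

noncomputable section

variable (K : Type*) [Field K] {O A1 : Type*} [Fintype O] [DecidableEq O]

/-- Basis element `b` of the quasigroupoid magma `K[B]`. -/
def gb (a : A1) : A1 →₀ K := Finsupp.single a 1

/-- The product of the quasigroupoid magma: bilinear extension of the partial
product (`a•b` when `s a = t b`, and `0` otherwise). -/
def gmul (Q : Quasigroupoid O A1) :
    (A1 →₀ K) →ₗ[K] (A1 →₀ K) →ₗ[K] (A1 →₀ K) :=
  Finsupp.lift ((A1 →₀ K) →ₗ[K] (A1 →₀ K)) K A1 fun a =>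
    Finsupp.lift (A1 →₀ K) K A1 fun b =>
      if Q.s a = Q.t b then Finsupp.single (Q.mul a b) 1 else 0

/-- The unit `1 = ∑_{x ∈ B₀} id_B(x)` of the quasigroupoid magma. -/
def gone (Q : Quasigroupoid O A1) : A1 →₀ K := ∑ x : O, Finsupp.single (Q.e x) 1

/-- The coproduct: linear extension of `δ(b) = b ⊗ b`. -/
def gdelta : (A1 →₀ K) →ₗ[K] (A1 →₀ K) ⊗[K] (A1 →₀ K) :=
  Finsupp.lift ((A1 →₀ K) ⊗[K] (A1 →₀ K)) K A1 fun a =>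
    Finsupp.single a 1 ⊗ₜ[K] Finsupp.single a 1

/-- The counit: linear extension of `ε(b) = 1`. -/
def geps : (A1 →₀ K) →ₗ[K] K := Finsupp.lift K K A1 fun _ => 1

/-- The antipode: linear extension of `λ(b) = λ_B(b)`. -/
def gS (Q : Quasigroupoid O A1) : (A1 →₀ K) →ₗ[K] (A1 →₀ K) :=
  Finsupp.lift (A1 →₀ K) K A1 fun a => Finsupp.single (Q.inv a) 1

/-- The target map: linear extension of `Π^L(b) = id_B(t_B b)`. -/
def gPiL (Q : Quasigroupoid O A1) : (A1 →₀ K) →ₗ[K] (A1 →₀ K) :=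
  Finsupp.lift (A1 →₀ K) K A1 fun a => Finsupp.single (Q.e (Q.t a)) 1

/-- The source map: linear extension of `Π^R(b) = id_B(s_B b)`. -/
def gPiR (Q : Quasigroupoid O A1) : (A1 →₀ K) →ₗ[K] (A1 →₀ K) :=
  Finsupp.lift (A1 →₀ K) K A1 fun a => Finsupp.single (Q.e (Q.s a)) 1

end

/-! Applied to identity arrows, the guarded cancellation axioms give the groupoid-like laws
`t (λ a) = s a`, `a λ(a) = id (t a)` and `λ (λ a) = a`. Every structure map of `K[B]` sends a
basis arrow to a basis arrow or to `0`, so on basis elements each axiom becomes one of these laws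
when the arrows involved are composable, and `0 = 0` otherwise. The coalgebra is Mathlib's
coalgebra structure on `A →₀ K`, in which every basis arrow is grouplike. -/

namespace Quasigroupoid

variable {O A : Type*} (Q : Quasigroupoid O A)

theorem e_mul_of_t_eq {x : O} {a : A} (h : Q.t a = x) : Q.mul (Q.e x) a = a :=
  h ▸ Q.e_mul a

theorem mul_e_of_s_eq {x : O} {a : A} (h : Q.s a = x) : Q.mul a (Q.e x) = a :=
  h ▸ Q.mul_e a

theorem t_inv (a : A) : Q.t (Q.inv a) = Q.s a := by
  simpa only [Q.e_mul] using (Q.comp_inv_right (Q.e (Q.t a)) a (Q.s_e _)).symm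

theorem s_inv (a : A) : Q.s (Q.inv a) = Q.t a := by
  simpa only [Q.mul_e] using Q.inv_comp_left a (Q.e (Q.s a)) (Q.t_e _).symm

theorem mul_inv_self (a : A) : Q.mul a (Q.inv a) = Q.e (Q.t a) := by
  simpa only [Q.e_mul] using Q.mul_inv_cancel (Q.e (Q.t a)) a (Q.s_e _)

theorem inv_mul_self (a : A) : Q.mul (Q.inv a) a = Q.e (Q.s a) := by
  simpa only [Q.mul_e] using Q.inv_mul_cancel a (Q.e (Q.s a)) (Q.t_e _).symm

theorem inv_inv (a : A) : Q.inv (Q.inv a) = a := by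
  have hs : Q.s (Q.inv (Q.inv a)) = Q.s a := by rw [s_inv, t_inv]
  calc Q.inv (Q.inv a) = Q.mul (Q.inv (Q.inv a)) (Q.mul (Q.inv a) a) := by
        rw [inv_mul_self, mul_e_of_s_eq _ hs]
    _ = a := Q.inv_mul_cancel _ _ (Q.s_inv a)

theorem mul_inv_cancel_left {a b : A} (h : Q.t a = Q.t b) : Q.mul a (Q.mul (Q.inv a) b) = b := by
  simpa only [Q.inv_inv] using Q.inv_mul_cancel (Q.inv a) b ((Q.s_inv a).trans h)

theorem inv_mul_cancel_right {a b : A} (h : Q.s a = Q.s b) : Q.mul (Q.mul a (Q.inv b)) b = a := by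
  simpa only [Q.inv_inv] using Q.mul_inv_cancel a (Q.inv b) (h.trans (Q.t_inv b).symm)

end Quasigroupoid

section Coalgebra

variable (K : Type*) [Field K] {A : Type*}

theorem ext_gb {M : Type*} [AddCommMonoid M] [Module K M] {φ ψ : (A →₀ K) →ₗ[K] M}
    (h : ∀ a, φ (gb K a) = ψ (gb K a)) : φ = ψ :=
  Finsupp.lhom_ext' fun a => LinearMap.ext_ring (h a)

theorem gdelta_gb (a : A) : gdelta K (gb K a) = gb K a ⊗ₜ[K] gb K a := by
  simp [gdelta, gb]

theorem geps_gb (a : A) : geps K (gb K a) = 1 := by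
  simp [geps, gb]

theorem gdelta_eq_comul : gdelta K = (Coalgebra.comul : (A →₀ K) →ₗ[K] _) :=
  ext_gb K fun a => by rw [gdelta_gb]; simp [gb]

theorem geps_eq_counit : geps K = (Coalgebra.counit : (A →₀ K) →ₗ[K] K) :=
  ext_gb K fun a => by rw [geps_gb]; simp [gb]

theorem coassoc_gdelta (v : A →₀ K) :
    TensorProduct.assoc K (A →₀ K) (A →₀ K) (A →₀ K)
        (TensorProduct.map (gdelta K) LinearMap.id (gdelta K v)) =
      TensorProduct.map LinearMap.id (gdelta K) (gdelta K v) := by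
  rw [gdelta_eq_comul]
  exact Coalgebra.coassoc_apply v

theorem lid_map_geps_gdelta (v : A →₀ K) :
    TensorProduct.lid K (A →₀ K) (TensorProduct.map (geps K) LinearMap.id (gdelta K v)) = v := by
  rw [gdelta_eq_comul, geps_eq_counit]
  exact (congrArg _ (Coalgebra.rTensor_counit_comul v)).trans
    (by rw [TensorProduct.lid_tmul, one_smul])

theorem rid_map_geps_gdelta (v : A →₀ K) :
    TensorProduct.rid K (A →₀ K) (TensorProduct.map LinearMap.id (geps K) (gdelta K v)) = v := by
  rw [gdelta_eq_comul, geps_eq_counit]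
  exact (congrArg _ (Coalgebra.lTensor_counit_comul v)).trans
    (by rw [TensorProduct.rid_tmul, one_smul])

theorem comm_gdelta (v : A →₀ K) :
    TensorProduct.comm K (A →₀ K) (A →₀ K) (gdelta K v) = gdelta K v := by
  rw [gdelta_eq_comul]
  exact Coalgebra.comm_comul K v

end Coalgebra

section Magma

variable (K : Type*) [Field K] {O A : Type*} (Q : Quasigroupoid O A)

theorem gS_gb (a : A) : gS K Q (gb K a) = gb K (Q.inv a) := by
  simp [gS, gb]

theorem gPiL_gb (a : A) : gPiL K Q (gb K a) = gb K (Q.e (Q.t a)) := by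
  simp [gPiL, gb]

theorem gPiR_gb (a : A) : gPiR K Q (gb K a) = gb K (Q.e (Q.s a)) := by
  simp [gPiR, gb]

theorem gone_eq_sum [Fintype O] : gone K Q = ∑ x, gb K (Q.e x) := rfl

variable [DecidableEq O]

theorem gmul_gb (a b : A) :
    gmul K Q (gb K a) (gb K b) = if Q.s a = Q.t b then gb K (Q.mul a b) else 0 := by
  simp [gmul, gb]

theorem gmul_gb_e_gb_e (x y : O) :
    gmul K Q (gb K (Q.e x)) (gb K (Q.e y)) = if x = y then gb K (Q.e x) else 0 := by
  rw [gmul_gb, Q.s_e, Q.t_e]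
  split_ifs with h
  · rw [← h, Q.e_mul_of_t_eq (Q.t_e x)]
  · rfl

theorem gmul_gone_left [Fintype O] (f : A →₀ K) : gmul K Q (gone K Q) f = f := by
  refine LinearMap.congr_fun (ext_gb K (ψ := LinearMap.id) fun a => ?_) f
  rw [gone_eq_sum, map_sum, LinearMap.sum_apply, Finset.sum_eq_single (Q.t a)]
  · rw [gmul_gb, if_pos (Q.s_e _), Q.e_mul, LinearMap.id_apply]
  · intro x _ hx
    rw [gmul_gb, if_neg (by rwa [Q.s_e])]
  · simp

theorem gmul_gone_right [Fintype O] (f : A →₀ K) : gmul K Q f (gone K Q) = f := by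
  refine LinearMap.congr_fun (ext_gb K (φ := (gmul K Q).flip (gone K Q)) (ψ := LinearMap.id)
    fun a => ?_) f
  rw [LinearMap.flip_apply, gone_eq_sum, map_sum, Finset.sum_eq_single (Q.s a)]
  · rw [gmul_gb, if_pos (Q.t_e _).symm, Q.mul_e, LinearMap.id_apply]
  · intro x _ hx
    rw [gmul_gb, if_neg (by rw [Q.t_e]; exact Ne.symm hx)]
  · simp

theorem gdelta_gmul_gb (a b : A) :
    gdelta K (gmul K Q (gb K a) (gb K b)) =
      gmul K Q (gb K a) (gb K b) ⊗ₜ[K] gmul K Q (gb K a) (gb K b) := by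
  rw [gmul_gb]
  split_ifs
  · exact gdelta_gb K _
  · simp

theorem geps_gmul_gb (a b : A) :
    geps K (gmul K Q (gb K a) (gb K b)) = if Q.s a = Q.t b then 1 else 0 := by
  rw [gmul_gb]
  split_ifs
  · exact geps_gb K _
  · exact map_zero _

theorem geps_gmul_gmul_gb (a b c : A) :
    geps K (gmul K Q (gmul K Q (gb K a) (gb K b)) (gb K c)) =
      if Q.s a = Q.t b ∧ Q.s b = Q.t c then 1 else 0 := by
  rw [gmul_gb K Q a b]
  by_cases hab : Q.s a = Q.t b
  · simp [hab, geps_gmul_gb, Q.s_mul a b hab]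
  · simp [hab]

theorem geps_gmul_gb_gmul (a b c : A) :
    geps K (gmul K Q (gb K a) (gmul K Q (gb K b) (gb K c))) =
      if Q.s a = Q.t b ∧ Q.s b = Q.t c then 1 else 0 := by
  rw [gmul_gb K Q b c]
  by_cases hbc : Q.s b = Q.t c
  · simp [hbc, geps_gmul_gb, Q.t_mul b c hbc]
  · simp [hbc]

theorem geps_gmul_gmul_gb_eq_mul (a b c : A) :
    geps K (gmul K Q (gmul K Q (gb K a) (gb K b)) (gb K c)) =
      geps K (gmul K Q (gb K a) (gb K b)) * geps K (gmul K Q (gb K b) (gb K c)) := by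
  rw [geps_gmul_gmul_gb, geps_gmul_gb, geps_gmul_gb, ite_zero_mul_ite_zero, one_mul]

theorem sum_e_tmul_e_tmul_e_eq_sum_gmul_left [Fintype O] :
    (∑ x : O, gb K (Q.e x) ⊗ₜ[K] (gb K (Q.e x) ⊗ₜ[K] gb K (Q.e x))) =
      ∑ x : O, ∑ y : O,
        gb K (Q.e x) ⊗ₜ[K] (gmul K Q (gb K (Q.e x)) (gb K (Q.e y)) ⊗ₜ[K] gb K (Q.e y)) := by
  simp [gmul_gb_e_gb_e, TensorProduct.ite_tmul, TensorProduct.tmul_ite]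

theorem sum_e_tmul_e_tmul_e_eq_sum_gmul_right [Fintype O] :
    (∑ x : O, gb K (Q.e x) ⊗ₜ[K] (gb K (Q.e x) ⊗ₜ[K] gb K (Q.e x))) =
      ∑ x : O, ∑ y : O,
        gb K (Q.e x) ⊗ₜ[K] (gmul K Q (gb K (Q.e y)) (gb K (Q.e x)) ⊗ₜ[K] gb K (Q.e y)) := by
  simp [gmul_gb_e_gb_e, TensorProduct.ite_tmul, TensorProduct.tmul_ite]

theorem gmul_gb_gS_gb (a : A) : gmul K Q (gb K a) (gS K Q (gb K a)) = gPiL K Q (gb K a) := by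
  rw [gS_gb, gPiL_gb, gmul_gb, if_pos (Q.t_inv a).symm, Q.mul_inv_self]

theorem gmul_gS_gb_gb (a : A) : gmul K Q (gS K Q (gb K a)) (gb K a) = gPiR K Q (gb K a) := by
  rw [gS_gb, gPiR_gb, gmul_gb, if_pos (Q.s_inv a), Q.inv_mul_self]

theorem gPiL_gb_eq_sum_geps [Fintype O] (a : A) :
    gPiL K Q (gb K a) = ∑ x : O, geps K (gmul K Q (gb K (Q.e x)) (gb K a)) • gb K (Q.e x) := by
  simp [gPiL_gb, geps_gmul_gb, Q.s_e]

theorem gPiR_gb_eq_sum_geps [Fintype O] (a : A) :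
    gPiR K Q (gb K a) = ∑ x : O, geps K (gmul K Q (gb K a) (gb K (Q.e x))) • gb K (Q.e x) := by
  simp [gPiR_gb, geps_gmul_gb, Q.t_e, eq_comm]

theorem gmul_gS_gPiL_gb (a : A) :
    gmul K Q (gS K Q (gb K a)) (gPiL K Q (gb K a)) = gS K Q (gb K a) := by
  rw [gS_gb, gPiL_gb, gmul_gb, if_pos (by rw [Q.s_inv, Q.t_e]), Q.mul_e_of_s_eq (Q.s_inv a)]

theorem gmul_gPiR_gS_gb (a : A) :
    gmul K Q (gPiR K Q (gb K a)) (gS K Q (gb K a)) = gS K Q (gb K a) := by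
  rw [gS_gb, gPiR_gb, gmul_gb, if_pos (by rw [Q.s_e, Q.t_inv]), Q.e_mul_of_t_eq (Q.t_inv a)]

theorem gmul_gS_gb_gmul_gb (a b : A) :
    gmul K Q (gS K Q (gb K a)) (gmul K Q (gb K a) (gb K b)) =
      gmul K Q (gPiR K Q (gb K a)) (gb K b) := by
  rw [gS_gb, gPiR_gb, gmul_gb K Q a b, gmul_gb K Q (Q.e _) b, Q.s_e]
  split_ifs with h
  · rw [gmul_gb, if_pos (by rw [Q.s_inv, Q.t_mul a b h]), Q.inv_mul_cancel a b h,
      Q.e_mul_of_t_eq h.symm]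
  · exact map_zero _

theorem gmul_gb_gmul_gS_gb (a b : A) :
    gmul K Q (gb K a) (gmul K Q (gS K Q (gb K a)) (gb K b)) =
      gmul K Q (gPiL K Q (gb K a)) (gb K b) := by
  rw [gS_gb, gPiL_gb, gmul_gb K Q (Q.inv a) b, gmul_gb K Q (Q.e _) b, Q.s_inv, Q.s_e]
  split_ifs with h
  · rw [gmul_gb, if_pos (by rw [Q.t_mul _ _ ((Q.s_inv a).trans h), Q.t_inv]),
      Q.mul_inv_cancel_left h, Q.e_mul_of_t_eq h.symm]
  · exact map_zero _

theorem gmul_gmul_gb_gS_gb (a b : A) :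
    gmul K Q (gmul K Q (gb K b) (gb K a)) (gS K Q (gb K a)) =
      gmul K Q (gb K b) (gPiL K Q (gb K a)) := by
  rw [gS_gb, gPiL_gb, gmul_gb K Q b a, gmul_gb K Q b (Q.e _), Q.t_e]
  split_ifs with h
  · rw [gmul_gb, if_pos (by rw [Q.s_mul b a h, Q.t_inv]), Q.mul_inv_cancel b a h,
      Q.mul_e_of_s_eq h]
  · exact LinearMap.map_zero₂ _ _

theorem gmul_gmul_gb_gS_gb_gb (a b : A) :
    gmul K Q (gmul K Q (gb K b) (gS K Q (gb K a))) (gb K a) =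
      gmul K Q (gb K b) (gPiR K Q (gb K a)) := by
  rw [gS_gb, gPiR_gb, gmul_gb K Q b (Q.inv a), gmul_gb K Q b (Q.e _), Q.t_inv, Q.t_e]
  split_ifs with h
  · rw [gmul_gb, if_pos (by rw [Q.s_mul _ _ (h.trans (Q.t_inv a).symm), Q.s_inv]),
      Q.inv_mul_cancel_right h, Q.mul_e_of_s_eq h]
  · exact LinearMap.map_zero₂ _ _

end Magma

section

variable (K : Type*) [Field K] {O A1 : Type*} [Fintype O] [DecidableEq O]

/-- The quasigroupoid magma `K[B]` of a finite quasigroupoid `B` is a cocommutative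
weak Hopf quasigroup, with target map `Π^L(b) = id_B(t_B b)` and source map
`Π^R(b) = id_B(s_B b)`: all axioms (d1)–(d4) of a weak Hopf quasigroup hold
(axioms involving multilinear maps are stated on basis elements, which determines
them by (multi)linearity). -/
theorem quasigroupoid_magma_weakHopfQuasigroup (Q : Quasigroupoid O A1) :
    -- unital magma
    (∀ f : A1 →₀ K, gmul K Q (gone K Q) f = f ∧ gmul K Q f (gone K Q) = f) ∧
    -- coalgebra: coassociativity
    (∀ v : A1 →₀ K,
      (TensorProduct.assoc K (A1 →₀ K) (A1 →₀ K) (A1 →₀ K))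
        ((TensorProduct.map (gdelta K)
          (LinearMap.id : (A1 →₀ K) →ₗ[K] (A1 →₀ K))) (gdelta K v)) =
      (TensorProduct.map (LinearMap.id : (A1 →₀ K) →ₗ[K] (A1 →₀ K))
        (gdelta K)) (gdelta K v)) ∧
    -- coalgebra: counit laws
    (∀ v : A1 →₀ K,
      (TensorProduct.lid K (A1 →₀ K))
        ((TensorProduct.map (geps K)
          (LinearMap.id : (A1 →₀ K) →ₗ[K] (A1 →₀ K))) (gdelta K v)) = v) ∧
    (∀ v : A1 →₀ K,
      (TensorProduct.rid K (A1 →₀ K))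
        ((TensorProduct.map (LinearMap.id : (A1 →₀ K) →ₗ[K] (A1 →₀ K))
          (geps K)) (gdelta K v)) = v) ∧
    -- cocommutativity
    (∀ v : A1 →₀ K, (TensorProduct.comm K (A1 →₀ K) (A1 →₀ K)) (gdelta K v) = gdelta K v) ∧
    -- (d1) δ(hk) = h₍₁₎k₍₁₎ ⊗ h₍₂₎k₍₂₎ (on basis elements)
    (∀ a b : A1,
      gdelta K (gmul K Q (gb K a) (gb K b)) =
        gmul K Q (gb K a) (gb K b) ⊗ₜ[K] gmul K Q (gb K a) (gb K b)) ∧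
    -- (d2) weak counit multiplicativity (on basis elements)
    (∀ a b c : A1,
      geps K (gmul K Q (gmul K Q (gb K a) (gb K b)) (gb K c)) =
        geps K (gmul K Q (gb K a) (gmul K Q (gb K b) (gb K c))) ∧
      geps K (gmul K Q (gmul K Q (gb K a) (gb K b)) (gb K c)) =
        geps K (gmul K Q (gb K a) (gb K b)) * geps K (gmul K Q (gb K b) (gb K c))) ∧
    -- (d3) 1₍₁₎ ⊗ 1₍₂₎ ⊗ 1₍₃₎ = 1₍₁₎ ⊗ 1₍₂₎1₍₁'₎ ⊗ 1₍₂'₎ = 1₍₁₎ ⊗ 1₍₁'₎1₍₂₎ ⊗ 1₍₂'₎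
    ((∑ x : O, gb K (Q.e x) ⊗ₜ[K] (gb K (Q.e x) ⊗ₜ[K] gb K (Q.e x))) =
      ∑ x : O, ∑ y : O,
        gb K (Q.e x) ⊗ₜ[K] (gmul K Q (gb K (Q.e x)) (gb K (Q.e y)) ⊗ₜ[K] gb K (Q.e y))) ∧
    ((∑ x : O, gb K (Q.e x) ⊗ₜ[K] (gb K (Q.e x) ⊗ₜ[K] gb K (Q.e x))) =
      ∑ x : O, ∑ y : O,
        gb K (Q.e x) ⊗ₜ[K] (gmul K Q (gb K (Q.e y)) (gb K (Q.e x)) ⊗ₜ[K] gb K (Q.e y))) ∧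
    -- Π^L = id ∗ λ and Π^R = λ ∗ id (on basis elements)
    (∀ a : A1, gmul K Q (gb K a) (gS K Q (gb K a)) = gPiL K Q (gb K a)) ∧
    (∀ a : A1, gmul K Q (gS K Q (gb K a)) (gb K a) = gPiR K Q (gb K a)) ∧
    -- (d4-1) Π^L(h) = ε(1₍₁₎h)1₍₂₎
    (∀ a : A1, gPiL K Q (gb K a) =
      ∑ x : O, geps K (gmul K Q (gb K (Q.e x)) (gb K a)) • gb K (Q.e x)) ∧
    -- (d4-2) Π^R(h) = ε(h1₍₂₎)1₍₁₎
    (∀ a : A1, gPiR K Q (gb K a) =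
      ∑ x : O, geps K (gmul K Q (gb K a) (gb K (Q.e x))) • gb K (Q.e x)) ∧
    -- (d4-3) λ = λ ∗ Π^L = Π^R ∗ λ
    (∀ a : A1,
      gmul K Q (gS K Q (gb K a)) (gPiL K Q (gb K a)) = gS K Q (gb K a) ∧
      gmul K Q (gPiR K Q (gb K a)) (gS K Q (gb K a)) = gS K Q (gb K a)) ∧
    -- (d4-4) λ(h₍₁₎)(h₍₂₎k) = Π^R(h)k
    (∀ a b : A1,
      gmul K Q (gS K Q (gb K a)) (gmul K Q (gb K a) (gb K b)) =
        gmul K Q (gPiR K Q (gb K a)) (gb K b)) ∧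
    -- (d4-5) h₍₁₎(λ(h₍₂₎)k) = Π^L(h)k
    (∀ a b : A1,
      gmul K Q (gb K a) (gmul K Q (gS K Q (gb K a)) (gb K b)) =
        gmul K Q (gPiL K Q (gb K a)) (gb K b)) ∧
    -- (d4-6) (hk₍₁₎)λ(k₍₂₎) = hΠ^L(k)
    (∀ a b : A1,
      gmul K Q (gmul K Q (gb K b) (gb K a)) (gS K Q (gb K a)) =
        gmul K Q (gb K b) (gPiL K Q (gb K a))) ∧
    -- (d4-7) (hλ(k₍₁₎))k₍₂₎ = hΠ^R(k)
    (∀ a b : A1,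
      gmul K Q (gmul K Q (gb K b) (gS K Q (gb K a))) (gb K a) =
        gmul K Q (gb K b) (gPiR K Q (gb K a))) ∧
    -- the explicit form of the target and source maps
    (∀ a : A1, gPiL K Q (gb K a) = gb K (Q.e (Q.t a))) ∧
    (∀ a : A1, gPiR K Q (gb K a) = gb K (Q.e (Q.s a))) :=
  ⟨fun f => ⟨gmul_gone_left K Q f, gmul_gone_right K Q f⟩,
    coassoc_gdelta K, lid_map_geps_gdelta K, rid_map_geps_gdelta K, comm_gdelta K,
    gdelta_gmul_gb K Q,
    fun a b c => ⟨(geps_gmul_gmul_gb K Q a b c).trans (geps_gmul_gb_gmul K Q a b c).symm,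
      geps_gmul_gmul_gb_eq_mul K Q a b c⟩,
    sum_e_tmul_e_tmul_e_eq_sum_gmul_left K Q, sum_e_tmul_e_tmul_e_eq_sum_gmul_right K Q,
    gmul_gb_gS_gb K Q, gmul_gS_gb_gb K Q,
    gPiL_gb_eq_sum_geps K Q, gPiR_gb_eq_sum_geps K Q,
    fun a => ⟨gmul_gS_gPiL_gb K Q a, gmul_gPiR_gS_gb K Q a⟩,
    gmul_gS_gb_gmul_gb K Q, gmul_gb_gmul_gS_gb K Q,
    gmul_gmul_gb_gS_gb K Q, gmul_gmul_gb_gS_gb_gb K Q,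
    gPiL_gb K Q, gPiR_gb K Q⟩

end
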